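/- For every integer n ≥ 1 and every real number p > 0 with p ≠ 1, there exist real numbers a > 0 and b > 0 such that (bⁿ(b+1)/a) · B(p+1, (b+1)n/a) > (a^{n−1}(a+1) · B(p+1, (a+1)n/a))^{p/(n+p)} · (b^{n−1}(b+1) · B(p+1, (b+1)n/b))^{n/(n+p)}. (Since the quaternionic p-energies of the functions u_a(q) = ‖q‖^{2a} − 1 on the unit ball of ℍⁿ satisfy ∫(−u_a)^p(Δu_b)ⁿ = C·(bⁿ(b+1)/a)·B(p+1,(b+1)n/a) for a dimensional constant C, this shows the optimal constant C_p in the energy estimate e_p(u_0,…,u_n) ≤ C_p·e_p(u_0)^{p/(n+p)}·e_p(u_1)^{1/(n+p)}···e_p(u_n)^{1/(n+p)} is strictly greater than 1 when p ≠ 1.) -/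

import Mathlib

/-!
Suppose the inequality failed for all `a, b > 0`. Writing `K = mixedEnergy n p` and
`θ = p / (n + p)`, the failure says `K a b ≤ K a a ^ θ * K b b ^ (1 - θ)`, with equality at
`a = b`; so `a ↦ log K(a, b) - θ log K(a, a)` is maximal at `a = b`, and its vanishing derivative
there forces the logarithmic derivative of `y ↦ B(p + 1, y)` to be the rational function
`-((1 + p) w + p) / (w (w + p))` on `(n, ∞)`. But the recurrence
`B(p + 1, y + 1) = B(p + 1, y) · y / (p + 1 + y)` makes that logarithmic derivative increase by
`1/w - 1/(p + 1 + w)` from `w` to `w + 1`, which the rational function does only for `p = 0` or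
`p = 1`.
-/

/-- The Beta function `B(x,y) = ∫₀¹ t^(x-1) (1-t)^(y-1) dt`. -/
noncomputable def Beta (x y : ℝ) : ℝ := ∫ t in (0:ℝ)..1, t ^ (x - 1) * (1 - t) ^ (y - 1)

open Real Filter Topology

section Beta

variable {x y : ℝ}

theorem ofReal_Beta : (Beta x y : ℂ) = Complex.betaIntegral x y := by
  rw [Beta, Complex.betaIntegral, ← intervalIntegral.integral_ofReal]
  refine intervalIntegral.integral_congr fun t ht => ?_
  rw [Set.uIcc_of_le zero_le_one] at ht
  push_cast
  rw [Complex.ofReal_cpow ht.1, Complex.ofReal_cpow (sub_nonneg.2 ht.2)]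
  push_cast
  ring

theorem Beta_eq_Gamma_mul_Gamma_div (hx : 0 < x) (hy : 0 < y) :
    Beta x y = Gamma x * Gamma y / Gamma (x + y) := by
  rw [eq_div_iff (Gamma_pos_of_pos (add_pos hx hy)).ne', ← Complex.ofReal_inj]
  push_cast
  rw [← Complex.Gamma_ofReal, ← Complex.Gamma_ofReal, ← Complex.Gamma_ofReal, ofReal_Beta,
    Complex.ofReal_add, mul_comm]
  exact (Complex.Gamma_mul_Gamma_eq_betaIntegral (by simpa using hx) (by simpa using hy)).symm

theorem Beta_pos (hx : 0 < x) (hy : 0 < y) : 0 < Beta x y := by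
  rw [Beta_eq_Gamma_mul_Gamma_div hx hy]
  have := Gamma_pos_of_pos hx
  have := Gamma_pos_of_pos hy
  have := Gamma_pos_of_pos (add_pos hx hy)
  positivity

theorem Beta_add_one (hx : 0 < x) (hy : 0 < y) : Beta x (y + 1) = Beta x y * (y / (x + y)) := by
  have hxy : 0 < x + y := add_pos hx hy
  rw [Beta_eq_Gamma_mul_Gamma_div hx (by linarith), Beta_eq_Gamma_mul_Gamma_div hx hy,
    ← add_assoc, Gamma_add_one hy.ne', Gamma_add_one hxy.ne']
  have := Gamma_pos_of_pos hxy
  field_simp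

theorem differentiableAt_log_Beta (hx : 0 < x) (hy : 0 < y) :
    DifferentiableAt ℝ (fun y => log (Beta x y)) y := by
  have hΓ : ∀ z : ℝ, 0 < z → DifferentiableAt ℝ Gamma z := fun z hz =>
    differentiableAt_Gamma fun m => by linarith [(m.cast_nonneg : (0 : ℝ) ≤ m)]
  have hBeta : Beta x =ᶠ[𝓝 y] fun y => Gamma x * Gamma y / Gamma (x + y) := by
    filter_upwards [eventually_gt_nhds hy] with z hz using Beta_eq_Gamma_mul_Gamma_div hx hz
  have hdiff : DifferentiableAt ℝ (fun y => Gamma x * Gamma y / Gamma (x + y)) y :=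
    ((hΓ y hy).const_mul _).div ((hΓ _ (add_pos hx hy)).comp y (differentiableAt_id.const_add x))
      (Gamma_pos_of_pos (add_pos hx hy)).ne'
  exact (hdiff.congr_of_eventuallyEq hBeta).log (Beta_pos hx hy).ne'

theorem deriv_log_Beta_add_one (hx : 0 < x) (hy : 0 < y) :
    deriv (fun y => log (Beta x y)) (y + 1) =
      deriv (fun y => log (Beta x y)) y + 1 / y - 1 / (x + y) := by
  have hrec : (fun z => log (Beta x (z + 1))) =ᶠ[𝓝 y]
      fun z => log (Beta x z) + log z - log (x + z) := by
    filter_upwards [eventually_gt_nhds hy] with z hz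
    have := Beta_pos hx hz
    have : 0 < x + z := add_pos hx hz
    rw [Beta_add_one hx hz, log_mul (by positivity) (by positivity),
      log_div (by positivity) (by positivity), add_sub_assoc]
  have hderiv : HasDerivAt (fun z => log (Beta x z) + log z - log (x + z))
      (deriv (fun y => log (Beta x y)) y + 1 / y - 1 / (x + y)) y :=
    ((differentiableAt_log_Beta hx hy).hasDerivAt.add ((hasDerivAt_id' y).log hy.ne')).sub
      (((hasDerivAt_id' y).const_add x).log (add_pos hx hy).ne')
  rw [← deriv_comp_add_const, hrec.deriv_eq, hderiv.deriv]

end Beta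

theorem eq_mul_of_le_rpow_mul_rpow {K : ℝ → ℝ → ℝ} {θ b d₁ d₂ : ℝ}
    (hpos : ∀ᶠ a in 𝓝 b, 0 < K a b ∧ 0 < K a a)
    (hle : ∀ᶠ a in 𝓝 b, K a b ≤ K a a ^ θ * K b b ^ (1 - θ))
    (h₁ : HasDerivAt (fun a => log (K a b)) d₁ b)
    (h₂ : HasDerivAt (fun a => log (K a a)) d₂ b) :
    d₁ = θ * d₂ := by
  have hbb := hpos.self_of_nhds.2
  have hmax : IsLocalMax (fun a => log (K a b) - θ * log (K a a)) b := by
    filter_upwards [hpos, hle] with a ⟨hab, haa⟩ h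
    have := log_le_log hab h
    rw [log_mul (rpow_pos_of_pos haa _).ne' (rpow_pos_of_pos hbb _).ne', log_rpow haa,
      log_rpow hbb] at this
    linarith
  linarith [hmax.hasDerivAt_eq_zero (h₁.sub (h₂.const_mul θ))]

/-- Up to a dimensional constant, the mixed energy `∫ (-u_a)^p (Δu_b)^n` over the unit ball
of `ℍⁿ`, where `u_a(q) = ‖q‖^(2a) - 1`. -/
noncomputable def mixedEnergy (n : ℕ) (p a b : ℝ) : ℝ :=
  b ^ n * (b + 1) / a * Beta (p + 1) ((b + 1) * n / a)

section mixedEnergy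

variable {n : ℕ} {p a b : ℝ}

theorem mixedEnergy_self (hn : 1 ≤ n) (ha : a ≠ 0) :
    mixedEnergy n p a a = a ^ (n - 1) * (a + 1) * Beta (p + 1) ((a + 1) * n / a) := by
  rw [mixedEnergy, ← Nat.sub_add_cancel hn, pow_succ, Nat.add_sub_cancel]
  field_simp

theorem mixedEnergy_pos (hn : 0 < n) (hp : -1 < p) (ha : 0 < a) (hb : 0 < b) :
    0 < mixedEnergy n p a b := by
  have := Beta_pos (x := p + 1) (y := (b + 1) * n / a) (by linarith) (by positivity)
  unfold mixedEnergy
  positivity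

theorem hasDerivAt_log_mixedEnergy_left (hn : 0 < n) (hp : -1 < p) (ha : 0 < a) (hb : 0 < b) :
    HasDerivAt (fun a => log (mixedEnergy n p a b))
      (-(1 + (b + 1) * n / a * deriv (fun y => log (Beta (p + 1) y)) ((b + 1) * n / a)) / a) a := by
  set c : ℝ := (b + 1) * n
  have hc : 0 < c := by positivity
  have hlog : (fun a => log (mixedEnergy n p a b)) =ᶠ[𝓝 a]
      fun t => log (b ^ n * (b + 1)) - log t + log (Beta (p + 1) (c * t⁻¹)) := by
    filter_upwards [eventually_gt_nhds ha] with t ht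
    have := Beta_pos (x := p + 1) (y := c / t) (by linarith) (by positivity)
    rw [mixedEnergy, log_mul (by positivity) this.ne', log_div (by positivity) ht.ne',
      div_eq_mul_inv]
  have hderiv := (hasDerivAt_const a (log (b ^ n * (b + 1)))).sub (hasDerivAt_log ha.ne') |>.add
    ((differentiableAt_log_Beta (x := p + 1) (y := c * a⁻¹) (by linarith)
      (by positivity)).hasDerivAt.comp a
      ((hasDerivAt_inv ha.ne').const_mul c))
  refine (hderiv.congr_of_eventuallyEq hlog).congr_deriv ?_
  rw [← div_eq_mul_inv]
  field_simp
  ring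

theorem hasDerivAt_log_mixedEnergy_self (hn : 0 < n) (hp : -1 < p) (ha : 0 < a) :
    HasDerivAt (fun a => log (mixedEnergy n p a a))
      ((n - 1 + a / (a + 1) - n / a * deriv (fun y => log (Beta (p + 1) y)) ((a + 1) * n / a)) / a)
      a := by
  have hlog : (fun a => log (mixedEnergy n p a a)) =ᶠ[𝓝 a]
      fun t => n * log t + log (t + 1) - log t + log (Beta (p + 1) (n + n * t⁻¹)) := by
    filter_upwards [eventually_gt_nhds ha] with t ht
    have := Beta_pos (x := p + 1) (y := (t + 1) * n / t) (by linarith) (by positivity)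
    rw [mixedEnergy, log_mul (by positivity) this.ne', log_div (by positivity) ht.ne',
      log_mul (by positivity) (by positivity), log_pow]
    congr 3
    field_simp
  have hderiv := (((hasDerivAt_log ha.ne').const_mul (n : ℝ)).add
    ((hasDerivAt_id' a).add_const 1 |>.log (by positivity))).sub (hasDerivAt_log ha.ne') |>.add
    ((differentiableAt_log_Beta (x := p + 1) (y := n + n * a⁻¹) (by linarith)
      (by positivity)).hasDerivAt.comp a
      (((hasDerivAt_inv ha.ne').const_mul (n : ℝ)).const_add (n : ℝ)))
  refine (hderiv.congr_of_eventuallyEq hlog).congr_deriv ?_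
  rw [show (n : ℝ) + n * a⁻¹ = (a + 1) * n / a by field_simp]
  field_simp
  ring

theorem deriv_log_Beta_eq_of_mixedEnergy_le (hn : 1 ≤ n) (hp : -1 < p)
    (hle : ∀ a b, 0 < a → 0 < b →
      mixedEnergy n p a b ≤
        mixedEnergy n p a a ^ (p / (n + p)) * mixedEnergy n p b b ^ (n / (n + p)))
    {w : ℝ} (hw : n < w) :
    deriv (fun y => log (Beta (p + 1) y)) w = -((1 + p) * w + p) / (w * (w + p)) := by
  have hn' : (1 : ℝ) ≤ n := by exact_mod_cast hn
  have hwn : 0 < w - n := sub_pos.2 hw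
  have hw0 : 0 < w := by linarith
  have hnp : 0 < (n : ℝ) + p := by linarith
  set b : ℝ := n / (w - n)
  have hb : 0 < b := by positivity
  have hbw : (b + 1) * n / b = w := by
    simp only [b]
    field_simp
    ring
  have hkey := eq_mul_of_le_rpow_mul_rpow (K := mixedEnergy n p) (θ := p / (n + p))
    (by filter_upwards [eventually_gt_nhds hb] with a ha using
      ⟨mixedEnergy_pos hn hp ha hb, mixedEnergy_pos hn hp ha ha⟩)
    (by filter_upwards [eventually_gt_nhds hb] with a ha
        rw [show (1 : ℝ) - p / (n + p) = n / (n + p) by field_simp; ring]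
        exact hle a b ha hb)
    (hasDerivAt_log_mixedEnergy_left hn hp hb hb) (hasDerivAt_log_mixedEnergy_self hn hp hb)
  rw [hbw, show b / (b + 1) = n / w by simp only [b]; field_simp; ring,
    show (n : ℝ) / b = w - n by simp only [b]; field_simp] at hkey
  field_simp at hkey
  rw [eq_div_iff (mul_pos hw0 (by linarith)).ne']
  apply mul_left_cancel₀ (show (n : ℝ) ≠ 0 by positivity)
  linear_combination -hkey

end mixedEnergy

/-- For every integer `n ≥ 1` and every real `p > 0` with `p ≠ 1`, there exist
`a, b > 0` with
`(bⁿ(b+1)/a)·B(p+1,(b+1)n/a) >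
  (a^{n−1}(a+1)·B(p+1,(a+1)n/a))^{p/(n+p)} · (b^{n−1}(b+1)·B(p+1,(b+1)n/b))^{n/(n+p)}`;
hence the optimal constant in the quaternionic `p`-energy estimate exceeds `1`. -/
theorem exists_energy_counterexample (n : ℕ) (hn : 1 ≤ n) (p : ℝ) (hp : 0 < p)
    (hp1 : p ≠ 1) :
    ∃ a b : ℝ, 0 < a ∧ 0 < b ∧
      (b ^ n * (b + 1) / a) * Beta (p + 1) ((b + 1) * n / a) >
        (a ^ (n - 1) * (a + 1) * Beta (p + 1) ((a + 1) * n / a)) ^ (p / ((n : ℝ) + p)) *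
          (b ^ (n - 1) * (b + 1) * Beta (p + 1) ((b + 1) * n / b)) ^
            ((n : ℝ) / ((n : ℝ) + p)) := by
  by_contra! hle
  have hderiv (w : ℝ) (hw : n < w) :=
    deriv_log_Beta_eq_of_mixedEnergy_le (p := p) hn (by linarith)
      (fun a b ha hb => by
        rw [mixedEnergy_self hn ha.ne', mixedEnergy_self hn hb.ne']
        exact hle a b ha hb) hw
  set w : ℝ := n + 1
  have hw : 0 < w := by positivity
  have hrec := deriv_log_Beta_add_one (x := p + 1) (by linarith) hw
  rw [hderiv w (by simp [w]), hderiv (w + 1) (by simp [w]; linarith)] at hrec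
  field_simp at hrec
  have hcontra : p * (1 - p) * (w * (w + p + 1)) = 0 := by linear_combination hrec
  rcases mul_eq_zero.1 ((mul_eq_zero.1 hcontra).resolve_right (by positivity)) with h | h
  · exact hp.ne' h
  · exact hp1 (by linarith)
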